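/- Discrete sub-critical boundary estimate: let λ₁ > 0, λ₂ < 0, γ₀² ≤ −λ₂/λ₁, γ₁² ≤ −λ₁/λ₂, and set penalties τ₀₁ = λ₁, τ₀₂ = γ₀λ₁, τ_{N2} = −λ₂, τ_{N1} = −γ₁λ₂. Then for all real a₁, a₂ (boundary values of w₁, w₂ at node 0) and b₁, b₂ (values at node N): [λ₁a₁² + λ₂a₂² − (τ₀₁ a₁(a₁ − γ₀a₂) + τ₀₂ a₂(a₁ − γ₀a₂))] − [λ₁b₁² + λ₂b₂² + (τ_{N1} b₁(b₂ − γ₁b₁) + τ_{N2} b₂(b₂ − γ₁b₁))] = (λ₂ + λ₁γ₀²)a₂² − (λ₁ + λ₂γ₁²)b₁² ≤ 0. -/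

import Mathlib

/-! The penalties are chosen so that, at each boundary, the contribution of the incoming
characteristic variable (and every cross term) cancels, leaving only a multiple of the square
of the outgoing one; the sub-critical bounds on `γ₀`, `γ₁` fix the sign of those multiples. -/

theorem left_boundary_form_eq (lam1 lam2 g0 a1 a2 : ℝ) :
    lam1 * a1 ^ 2 + lam2 * a2 ^ 2
        - (lam1 * a1 * (a1 - g0 * a2) + g0 * lam1 * a2 * (a1 - g0 * a2))
      = (lam2 + lam1 * g0 ^ 2) * a2 ^ 2 := by
  ring

theorem right_boundary_form_eq (lam1 lam2 g1 b1 b2 : ℝ) :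
    lam1 * b1 ^ 2 + lam2 * b2 ^ 2
        + (-g1 * lam2 * b1 * (b2 - g1 * b1) + -lam2 * b2 * (b2 - g1 * b1))
      = (lam1 + lam2 * g1 ^ 2) * b1 ^ 2 := by
  ring

theorem add_mul_sq_nonpos_of_sq_le_neg_div {p q g : ℝ} (hp : 0 < p) (h : g ^ 2 ≤ -q / p) :
    q + p * g ^ 2 ≤ 0 := by
  rw [le_div_iff₀ hp] at h
  linarith

theorem add_mul_sq_nonneg_of_sq_le_neg_div {p q g : ℝ} (hp : p < 0) (h : g ^ 2 ≤ -q / p) :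
    0 ≤ q + p * g ^ 2 := by
  rw [le_div_iff_of_neg hp] at h
  linarith

theorem discrete_subcritical_estimate (lam1 lam2 g0 g1 t01 t02 tN1 tN2 a1 a2 b1 b2 : ℝ)
    (h1 : 0 < lam1) (h2 : lam2 < 0)
    (hg0 : g0 ^ 2 ≤ -lam2 / lam1) (hg1 : g1 ^ 2 ≤ -lam1 / lam2)
    (ht01 : t01 = lam1) (ht02 : t02 = g0 * lam1)
    (htN2 : tN2 = -lam2) (htN1 : tN1 = -g1 * lam2) :
    (lam1 * a1 ^ 2 + lam2 * a2 ^ 2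
        - (t01 * a1 * (a1 - g0 * a2) + t02 * a2 * (a1 - g0 * a2)))
      - (lam1 * b1 ^ 2 + lam2 * b2 ^ 2
        + (tN1 * b1 * (b2 - g1 * b1) + tN2 * b2 * (b2 - g1 * b1)))
      = (lam2 + lam1 * g0 ^ 2) * a2 ^ 2 - (lam1 + lam2 * g1 ^ 2) * b1 ^ 2 ∧
    (lam2 + lam1 * g0 ^ 2) * a2 ^ 2 - (lam1 + lam2 * g1 ^ 2) * b1 ^ 2 ≤ 0 := by
  subst ht01 ht02 htN1 htN2
  refine ⟨by rw [left_boundary_form_eq, right_boundary_form_eq], sub_nonpos.2 ?_⟩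
  have hleft := add_mul_sq_nonpos_of_sq_le_neg_div h1 hg0
  have hright := add_mul_sq_nonneg_of_sq_le_neg_div h2 hg1
  exact (mul_nonpos_of_nonpos_of_nonneg hleft (sq_nonneg a2)).trans
    (mul_nonneg hright (sq_nonneg b1))
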